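/- arXiv:2012.08268 — 2 statements merged into one kernel-verified Lean document; each statement's English description precedes it below -/
import Mathlib

section
/- Formal contexts with closed relations form a category: (i) if R is a closed relation K1 → K2 and S is a closed relation K2 → K3 then S ∘ R is a closed relation K1 → K3; (ii) the relation id_K(g) := cl({g}) is a closed relation K → K; (iii) R ∘ id_{K1} = R and id_{K2} ∘ R = R for every closed relation R : K1 → K2; (iv) composition is associative: (T ∘ S) ∘ R = T ∘ (S ∘ R) for closed relations R : K1 → K2, S : K2 → K3, T : K3 → K4. -/
open Set

/-- A formal context `(G, M, I)`: a set of objects, a set of attributes,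
and an incidence relation between them. -/
structure FormalContext where
  G : Type*
  M : Type*
  I : G → M → Prop

namespace FormalContext

variable (K : FormalContext)

/-- `A'` for a set of objects `A ⊆ G`. -/
def polarG (A : Set K.G) : Set K.M := upperPolar K.I A

/-- `B'` for a set of attributes `B ⊆ M`. -/
def polarM (B : Set K.M) : Set K.G := lowerPolar K.I B

/-- The closure `cl(A) = A''` of a set of objects. -/
def clG (A : Set K.G) : Set K.G := K.polarM (K.polarG A)

/-- The closure `cl(B) = B''` of a set of attributes. -/
def clM (B : Set K.M) : Set K.M := K.polarG (K.polarM B)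

/-- A set of objects is closed when it equals its closure. -/
def ClosedG (A : Set K.G) : Prop := K.clG A = A

/-- A set of attributes is closed when it equals its closure. -/
def ClosedM (B : Set K.M) : Prop := K.clM B = B

/-- The dual context `K* = (M, G, I†)`. -/
def dual : FormalContext := ⟨K.M, K.G, fun m g => K.I g m⟩

/-- The direct product `K1 ⊗ K2` of formal contexts (Ganter–Wille). -/
def dprod (K1 K2 : FormalContext) : FormalContext :=
  ⟨K1.G × K2.G, K1.M × K2.M, fun g m => K1.I g.1 m.1 ∨ K2.I g.2 m.2⟩

end FormalContext

/-- The trivial context `I = ({⋆},{⋆},≠)`. -/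
def trivCxt : FormalContext := ⟨PUnit, PUnit, fun a b => a ≠ b⟩

/-- The image `R(S)` of a set under a relation. -/
def relImage {X Y : Type*} (R : X → Y → Prop) (S : Set X) : Set Y :=
  {y | ∃ x ∈ S, R x y}

/-- `R^•(T) = {x | R(x) ⊆ T}`. -/
def relDot {X Y : Type*} (R : X → Y → Prop) (T : Set Y) : Set X :=
  {x | ∀ y, R x y → y ∈ T}

/-- `R_•(S) = {y | ∀ x ∈ S, R(x,y)}`. -/
def relLower {X Y : Type*} (R : X → Y → Prop) (S : Set X) : Set Y :=
  {y | ∀ x ∈ S, R x y}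

/-- A closed relation `K1 → K2`: each row `R(g)` is closed in `K2` and
`R^•` preserves closed sets. -/
structure IsClosedRel (K1 K2 : FormalContext) (R : K1.G → K2.G → Prop) : Prop where
  row_closed : ∀ g : K1.G, K2.ClosedG (relImage R {g})
  dot_closed : ∀ Y : Set K2.G, K2.ClosedG Y → K1.ClosedG (relDot R Y)

/-- Composition of closed relations: `(S ∘ R)(g) := cl(S(R(g)))`, closure in `K`. -/
def relComp {X Y : Type*} (K : FormalContext) (S : Y → K.G → Prop) (R : X → Y → Prop) :
    X → K.G → Prop :=
  fun g h => h ∈ K.clG (relImage S (relImage R {g}))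

/-- Composition on the attribute side: `(S ∘ R)(m) := cl(S(R(m)))`, closure on the
attribute side of `K`. -/
def relCompM {X Y : Type*} (K : FormalContext) (S : Y → K.M → Prop) (R : X → Y → Prop) :
    X → K.M → Prop :=
  fun m n => n ∈ K.clM (relImage S (relImage R {m}))

/-- The identity closed relation on `K`: `g ↦ cl({g})`. -/
def idClosedRel (K : FormalContext) : K.G → K.G → Prop := fun g h => h ∈ K.clG {g}

/-- A Chu correspondence `(R,S) : K1 → K2`. -/
structure IsChu (K1 K2 : FormalContext) (R : K1.G → K2.G → Prop) (S : K2.M → K1.M → Prop) :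
    Prop where
  extent_closed : ∀ g : K1.G, K2.ClosedG (relImage R {g})
  intent_closed : ∀ m : K2.M, K1.ClosedM (relImage S {m})
  adj : ∀ (g : K1.G) (m : K2.M),
    (∀ h ∈ relImage R {g}, K2.I h m) ↔ (∀ n ∈ relImage S {m}, K1.I g n)

/-- The intent relation `R*(m) := (R^•(m'))'` of a (closed) relation `R`. -/
def starRel (K1 K2 : FormalContext) (R : K1.G → K2.G → Prop) : K2.M → K1.M → Prop :=
  fun m n => n ∈ K1.polarG (relDot R (K2.polarM {m}))

/-- A bond from `K1` to `K2`: a relation `B ⊆ G1 × M2` with closed rows and columns. -/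
structure IsBond (K1 K2 : FormalContext) (B : K1.G → K2.M → Prop) : Prop where
  row_closed : ∀ g : K1.G, K2.ClosedM (relImage B {g})
  col_closed : ∀ m : K2.M, K1.ClosedG {g | B g m}

/-- The tensor `(R1 ⊗ R2)(g1,g2) := cl(R1(g1) × R2(g2))` of relations, closure in `K3 ⊗ K4`. -/
def tensorRelMor (K3 K4 : FormalContext) {X Y : Type*}
    (R1 : X → K3.G → Prop) (R2 : Y → K4.G → Prop) :
    X × Y → (K3.dprod K4).G → Prop :=
  fun p q => q ∈ (K3.dprod K4).clG (relImage R1 {p.1} ×ˢ relImage R2 {p.2})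

/-- The concept of `K` generated by a set of objects `A`: `(cl(A), A')`. -/
def conceptOfSet (K : FormalContext) (A : Set K.G) : Concept K.G K.M K.I where
  extent := K.clG A
  intent := K.polarG A
  upperPolar_extent := upperPolar_lowerPolar_upperPolar K.I A
  lowerPolar_intent := rfl

/-- The sup-lattice map `ℬ(R)` on concept lattices induced by a relation:
`(A,A') ↦ (cl(R(A)), R(A)')`. -/
def conceptMap (K1 K2 : FormalContext) (R : K1.G → K2.G → Prop) :
    Concept K1.G K1.M K1.I → Concept K2.G K2.M K2.I :=
  fun c => conceptOfSet K2 (relImage R c.extent)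

/-- The incidence relation of the context whose concept lattice is the concept tensor
`V1 ⊗ V2`: `(x,y) ∇ (w,z) iff x ≤ w or y ≤ z`. -/
def tensorRel (V1 V2 : Type*) [CompleteLattice V1] [CompleteLattice V2] :
    V1 × V2 → V1 × V2 → Prop :=
  fun p q => p.1 ≤ q.1 ∨ p.2 ≤ q.2

/-- The concept tensor `V1 ⊗ V2` of complete lattices (Wille's tensor product). -/
abbrev ConceptTensor (V1 V2 : Type*) [CompleteLattice V1] [CompleteLattice V2] :=
  Concept (V1 × V2) (V1 × V2) (tensorRel V1 V2)

/-- The tensorial operation `x ⊼ y`: the concept with extent `cl{(x,y)}` and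
intent `{(x,y)}'`. -/
def wedge {V1 V2 : Type*} [CompleteLattice V1] [CompleteLattice V2] (x : V1) (y : V2) :
    ConceptTensor V1 V2 where
  extent := lowerPolar (tensorRel V1 V2) (upperPolar (tensorRel V1 V2) {(x, y)})
  intent := upperPolar (tensorRel V1 V2) {(x, y)}
  upperPolar_extent := upperPolar_lowerPolar_upperPolar _ _
  lowerPolar_intent := rfl

/-- Two subsets of a complete lattice are mutually distributive: all families indexed
by a set `ι` satisfy the two distributivity laws. -/
def MutuallyDistrib {M : Type u} [CompleteLattice M] (X Y : Set M) : Prop :=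
  ∀ (ι : Type u) (x y : ι → M), (∀ i, x i ∈ X) → (∀ i, y i ∈ Y) →
    ((⨆ i, x i ⊓ y i) = ⨅ J : Set ι, ((⨆ j ∈ J, x j) ⊔ ⨆ k ∈ Jᶜ, y k)) ∧
    ((⨅ i, x i ⊔ y i) = ⨆ J : Set ι, ((⨅ j ∈ J, x j) ⊓ ⨅ k ∈ Jᶜ, y k))
section Aux

variable {K : FormalContext}

lemma clG_mono {A B : Set K.G} (h : A ⊆ B) : K.clG A ⊆ K.clG B :=
  lowerPolar_anti _ (upperPolar_anti _ h)

lemma subset_clG (A : Set K.G) : A ⊆ K.clG A :=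
  subset_lowerPolar_upperPolar _ _

lemma clG_closed (A : Set K.G) : K.ClosedG (K.clG A) := by
  show K.polarM (K.polarG (K.polarM (K.polarG A))) = K.polarM (K.polarG A)
  unfold FormalContext.polarM FormalContext.polarG
  rw [upperPolar_lowerPolar_upperPolar]

lemma clG_min {A Y : Set K.G} (hY : K.ClosedG Y) (h : A ⊆ Y) : K.clG A ⊆ Y :=
  hY ▸ clG_mono h

lemma relImage_mono {X Y : Type*} (R : X → Y → Prop) {A B : Set X} (h : A ⊆ B) :
    relImage R A ⊆ relImage R B := fun y ⟨x, hx, hr⟩ => ⟨x, h hx, hr⟩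

lemma relImage_singleton {X Y : Type*} (R : X → Y → Prop) (x : X) (y : Y) :
    y ∈ relImage R {x} ↔ R x y := by
  constructor
  · rintro ⟨x', hx', h⟩; rwa [Set.mem_singleton_iff.mp hx'] at h
  · exact fun h => ⟨x, rfl, h⟩

lemma relImage_subset_iff {X Y : Type*} (R : X → Y → Prop) {A : Set X} {T : Set Y} :
    relImage R A ⊆ T ↔ A ⊆ relDot R T := by
  constructor
  · intro h x hx y hy; exact h ⟨x, hx, hy⟩
  · rintro h y ⟨x, hx, hr⟩; exact h hx y hr

/-- Key lemma: a closed relation maps closures into closures. -/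
lemma key {K2 : FormalContext} {R : K.G → K2.G → Prop} (hR : IsClosedRel K K2 R)
    (A : Set K.G) : relImage R (K.clG A) ⊆ K2.clG (relImage R A) := by
  rw [relImage_subset_iff]
  refine clG_min (hR.dot_closed _ (clG_closed _)) ?_
  rw [← relImage_subset_iff]
  exact subset_clG _

lemma relImage_image {X Y : Type*} (R : X → Y → Prop) (A : Set X) :
    relImage R A = ⋃ x ∈ A, relImage R {x} := by
  ext y
  simp only [Set.mem_iUnion, relImage_singleton]
  exact ⟨fun ⟨x, hx, h⟩ => ⟨x, hx, h⟩, fun ⟨x, hx, h⟩ => ⟨x, hx, h⟩⟩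

end Aux

/-- Formal contexts and closed relations form a category. -/
theorem closedRel_category (K1 K2 K3 K4 : FormalContext) :
    (∀ (R : K1.G → K2.G → Prop) (S : K2.G → K3.G → Prop),
      IsClosedRel K1 K2 R → IsClosedRel K2 K3 S →
      IsClosedRel K1 K3 (relComp K3 S R)) ∧
    (IsClosedRel K1 K1 (idClosedRel K1)) ∧
    (∀ R : K1.G → K2.G → Prop, IsClosedRel K1 K2 R →
      relComp K2 R (idClosedRel K1) = R ∧ relComp K2 (idClosedRel K2) R = R) ∧
    (∀ (R : K1.G → K2.G → Prop) (S : K2.G → K3.G → Prop) (T : K3.G → K4.G → Prop),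
      IsClosedRel K1 K2 R → IsClosedRel K2 K3 S → IsClosedRel K3 K4 T →
      relComp K4 (relComp K4 T S) R = relComp K4 T (relComp K3 S R)) := by
  refine ⟨?_, ?_, ?_, ?_⟩
  · -- composition of closed relations is closed
    intro R S hR hS
    constructor
    · intro g
      have h : relImage (relComp K3 S R) {g} = K3.clG (relImage S (relImage R {g})) := by
        ext h; rw [relImage_singleton]; rfl
      rw [h]; exact clG_closed _
    · intro Y hY
      have h : relDot (relComp K3 S R) Y = relDot R (relDot S Y) := by
        ext g
        show (∀ h, h ∈ K3.clG (relImage S (relImage R {g})) → h ∈ Y) ↔ _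
        constructor
        · intro hg
          have h1 : relImage S (relImage R {g}) ⊆ Y := (subset_clG _).trans hg
          have h2 := (relImage_subset_iff S).1 h1
          exact Set.singleton_subset_iff.1 ((relImage_subset_iff R).1 h2)
        · intro hg h hh
          exact clG_min hY ((relImage_subset_iff S).2 ((relImage_subset_iff R).2
            (Set.singleton_subset_iff.2 hg))) hh
      rw [h]; exact hR.dot_closed _ (hS.dot_closed _ hY)
  · -- identity is a closed relation
    constructor
    · intro g
      have h : relImage (idClosedRel K1) {g} = K1.clG {g} := by
        ext h; rw [relImage_singleton]; rfl
      rw [h]; exact clG_closed _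
    · intro Y hY
      have h : relDot (idClosedRel K1) Y = Y := by
        ext g
        constructor
        · intro hg; exact hg g (subset_clG {g} rfl)
        · intro hg h hh; exact clG_min hY (Set.singleton_subset_iff.2 hg) hh
      rw [h]; exact hY
  · -- unit laws
    intro R hR
    constructor
    · refine funext fun g => funext fun h => propext ?_
      have hid : relImage (idClosedRel K1) {g} = K1.clG {g} := by
        ext h; rw [relImage_singleton]; rfl
      have h1 : relImage R (K1.clG {g}) = relImage R {g} := by
        refine subset_antisymm ((key hR {g}).trans ?_) (relImage_mono R (subset_clG _))
        rw [hR.row_closed g]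
      show h ∈ K2.clG (relImage R (relImage (idClosedRel K1) {g})) ↔ R g h
      rw [hid, h1, hR.row_closed g, relImage_singleton]
    · refine funext fun g => funext fun h => propext ?_
      have h1 : relImage (idClosedRel K2) (relImage R {g}) = relImage R {g} := by
        refine subset_antisymm ?_ ?_
        · rintro k ⟨h, hh, hk⟩
          exact clG_min (hR.row_closed g) (Set.singleton_subset_iff.2 hh) hk
        · intro h hh; exact ⟨h, hh, subset_clG _ rfl⟩
      show h ∈ K2.clG (relImage (idClosedRel K2) (relImage R {g})) ↔ R g h
      rw [h1, hR.row_closed g, relImage_singleton]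
  · -- associativity
    intro R S T hR hS hT
    refine funext fun g => funext fun h => propext ?_
    set B := relImage R {g} with hB
    set C := relImage S B with hC
    set D := relImage T C with hD
    have hL : K4.clG (relImage (relComp K4 T S) B) = K4.clG D := by
      refine subset_antisymm ?_ ?_
      · refine clG_min (clG_closed D) ?_
        rintro k ⟨b, hb, hk⟩
        have : relImage T (relImage S {b}) ⊆ D :=
          relImage_mono T (relImage_mono S (Set.singleton_subset_iff.2 hb))
        have hk' : k ∈ K4.clG (relImage T (relImage S {b})) := hk
        exact clG_mono this hk'
      · refine clG_mono ?_
        rintro k ⟨c, ⟨b, hb, hc⟩, hk⟩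
        exact ⟨b, hb, subset_clG _ ⟨c, (relImage_singleton S b c).2 hc, hk⟩⟩
    have hRmid : K4.clG (relImage T (K3.clG C)) = K4.clG D := by
      refine subset_antisymm ?_ (clG_mono (relImage_mono T (subset_clG C)))
      exact clG_min (clG_closed D) (key hT C)
    have hrw : relImage (relComp K3 S R) {g} = K3.clG C := by
      ext k; rw [relImage_singleton]; rfl
    show h ∈ K4.clG (relImage (relComp K4 T S) B) ↔
      h ∈ K4.clG (relImage T (relImage (relComp K3 S R) {g}))
    rw [hrw, hL, hRmid]
end

section
/- Let V1, V2, M be complete lattices and let f : V1 → M and g : V2 → M be complete lattice homomorphisms (preserving arbitrary suprema and arbitrary infima) whose images f(V1) and g(V2) are mutually distributive in M. Then there exists a unique complete lattice homomorphism h : V1 ⊗ V2 → M with h ∘ ε1 = f and h ∘ ε2 = g, where ε1(x) := x ⊼ ⊤ and ε2(y) := ⊤ ⊼ y. -/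
open Set

set_option linter.unusedSectionVars false

section Aux
variable {V1 V2 M : Type*} [CompleteLattice V1] [CompleteLattice V2] [CompleteLattice M]
  {f : V1 → M} {g : V2 → M}

lemma mono_of_sup (hf_sup : ∀ s : Set V1, f (sSup s) = sSup (f '' s)) :
    Monotone f := by
  intro a b hab
  have h1 : sSup {a, b} = b := by simp [hab]
  have h2 := hf_sup {a, b}
  rw [h1] at h2
  simp [Set.image_pair] at h2
  exact h2

lemma easy_aux (hf : Monotone f) (hg : Monotone g) {p q : V1 × V2}
    (h : tensorRel V1 V2 p q) : f p.1 ⊓ g p.2 ≤ f q.1 ⊔ g q.2 := by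
  rcases h with h | h
  · exact le_trans inf_le_left (le_trans (hf h) le_sup_left)
  · exact le_trans inf_le_right (le_trans (hg h) le_sup_right)

lemma binf_fst_eq (hf_inf : ∀ s : Set V1, f (sInf s) = sInf (f '' s)) (B : Set (V1 × V2)) :
    f (sInf (Prod.fst '' B)) = ⨅ q ∈ B, f q.1 := by
  rw [hf_inf, ← Set.image_comp, sInf_image]; rfl

lemma binf_snd_eq (hg_inf : ∀ s : Set V2, g (sInf s) = sInf (g '' s)) (B : Set (V1 × V2)) :
    g (sInf (Prod.snd '' B)) = ⨅ q ∈ B, g q.2 := by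
  rw [hg_inf, ← Set.image_comp, sInf_image]; rfl

lemma bsup_fst_eq (hf_sup : ∀ s : Set V1, f (sSup s) = sSup (f '' s)) (B : Set (V1 × V2)) :
    f (sSup (Prod.fst '' B)) = ⨆ q ∈ B, f q.1 := by
  rw [hf_sup, ← Set.image_comp, sSup_image]; rfl

lemma bsup_snd_eq (hg_sup : ∀ s : Set V2, g (sSup s) = sSup (g '' s)) (B : Set (V1 × V2)) :
    g (sSup (Prod.snd '' B)) = ⨆ q ∈ B, g q.2 := by
  rw [hg_sup, ← Set.image_comp, sSup_image]; rfl

end Aux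

section Key
variable {V1 V2 M : Type*} [CompleteLattice V1] [CompleteLattice V2] [CompleteLattice M]
  {f : V1 → M} {g : V2 → M}
  (hf_sup : ∀ s : Set V1, f (sSup s) = sSup (f '' s))
  (hf_inf : ∀ s : Set V1, f (sInf s) = sInf (f '' s))
  (hg_sup : ∀ s : Set V2, g (sSup s) = sSup (g '' s))
  (hg_inf : ∀ s : Set V2, g (sInf s) = sInf (g '' s))
  (hdist : MutuallyDistrib (Set.range f) (Set.range g))

include hdist hf_inf hg_inf in
lemma key2 (B : Set (V1 × V2)) :
    (⨅ q ∈ B, f q.1 ⊔ g q.2) ≤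
      ⨆ p ∈ lowerPolar (tensorRel V1 V2) B, f p.1 ⊓ g p.2 := by
  classical
  set e : Set (M × M) := (fun q : V1 × V2 => (f q.1, g q.2)) '' B with he
  obtain ⟨-, h2⟩ := hdist e (fun i => i.1.1) (fun i => i.1.2)
    (by rintro ⟨⟨a, b⟩, ⟨q, hq, hq'⟩⟩; exact ⟨q.1, congrArg Prod.fst hq'⟩)
    (by rintro ⟨⟨a, b⟩, ⟨q, hq, hq'⟩⟩; exact ⟨q.2, congrArg Prod.snd hq'⟩)
  have hL : (⨅ q ∈ B, f q.1 ⊔ g q.2) = ⨅ i : e, i.1.1 ⊔ i.1.2 := by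
    rw [iInf_subtype'' e (fun i => i.1 ⊔ i.2), he, iInf_image]
  rw [hL, h2]
  apply iSup_le
  intro J
  set B1 : Set (V1 × V2) := {q | q ∈ B ∧ ∃ j ∈ J, (j : M × M) = (f q.1, g q.2)} with hB1
  set B2 : Set (V1 × V2) := {q | q ∈ B ∧ ∃ k ∈ Jᶜ, (k : M × M) = (f q.1, g q.2)} with hB2
  have c1 : (⨅ j ∈ J, (j : M × M).1) = ⨅ q ∈ B1, f q.1 := by
    apply le_antisymm
    · apply le_iInf₂; rintro q ⟨hqB, j, hj, hj'⟩
      calc (⨅ j ∈ J, (j : M × M).1) ≤ (j : M × M).1 := biInf_le _ hj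
        _ = f q.1 := by rw [hj']
    · apply le_iInf₂; rintro j hj
      obtain ⟨q, hqB, hq'⟩ := j.2
      have hq1 : q ∈ B1 := ⟨hqB, j, hj, hq'.symm⟩
      calc (⨅ q ∈ B1, f q.1) ≤ f q.1 := biInf_le _ hq1
        _ = (j : M × M).1 := by rw [← hq']
  have c2 : (⨅ k ∈ Jᶜ, (k : M × M).2) = ⨅ q ∈ B2, g q.2 := by
    apply le_antisymm
    · apply le_iInf₂; rintro q ⟨hqB, k, hk, hk'⟩
      calc (⨅ k ∈ Jᶜ, (k : M × M).2) ≤ (k : M × M).2 := biInf_le _ hk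
        _ = g q.2 := by rw [hk']
    · apply le_iInf₂; rintro k hk
      obtain ⟨q, hqB, hq'⟩ := k.2
      have hq1 : q ∈ B2 := ⟨hqB, k, hk, hq'.symm⟩
      calc (⨅ q ∈ B2, g q.2) ≤ g q.2 := biInf_le _ hq1
        _ = (k : M × M).2 := by rw [← hq']
  rw [c1, c2, ← binf_fst_eq hf_inf, ← binf_snd_eq hg_inf]
  have hmem : (sInf (Prod.fst '' B1), sInf (Prod.snd '' B2)) ∈
      lowerPolar (tensorRel V1 V2) B := by
    intro q hq
    by_cases hJ : (⟨(f q.1, g q.2), ⟨q, hq, rfl⟩⟩ : e) ∈ J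
    · left; exact sInf_le ⟨q, ⟨hq, _, hJ, rfl⟩, rfl⟩
    · right; exact sInf_le ⟨q, ⟨hq, _, hJ, rfl⟩, rfl⟩
  exact le_biSup (fun p : V1 × V2 => f p.1 ⊓ g p.2) hmem

include hdist hf_sup hg_sup in
lemma key1 (A : Set (V1 × V2)) :
    (⨅ q ∈ upperPolar (tensorRel V1 V2) A, f q.1 ⊔ g q.2) ≤
      ⨆ p ∈ A, f p.1 ⊓ g p.2 := by
  classical
  set e : Set (M × M) := (fun q : V1 × V2 => (f q.1, g q.2)) '' A with he
  obtain ⟨h1, -⟩ := hdist e (fun i => i.1.1) (fun i => i.1.2)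
    (by rintro ⟨⟨a, b⟩, ⟨q, hq, hq'⟩⟩; exact ⟨q.1, congrArg Prod.fst hq'⟩)
    (by rintro ⟨⟨a, b⟩, ⟨q, hq, hq'⟩⟩; exact ⟨q.2, congrArg Prod.snd hq'⟩)
  have hL : (⨆ p ∈ A, f p.1 ⊓ g p.2) = ⨆ i : e, i.1.1 ⊓ i.1.2 := by
    rw [iSup_subtype'' e (fun i => i.1 ⊓ i.2), he, iSup_image]
  rw [hL, h1]
  apply le_iInf
  intro J
  set A1 : Set (V1 × V2) := {q | q ∈ A ∧ ∃ j ∈ J, (j : M × M) = (f q.1, g q.2)} with hA1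
  set A2 : Set (V1 × V2) := {q | q ∈ A ∧ ∃ k ∈ Jᶜ, (k : M × M) = (f q.1, g q.2)} with hA2
  have c1 : (⨆ j ∈ J, (j : M × M).1) = ⨆ q ∈ A1, f q.1 := by
    apply le_antisymm
    · apply iSup₂_le; rintro j hj
      obtain ⟨q, hqA, hq'⟩ := j.2
      have hq1 : q ∈ A1 := ⟨hqA, j, hj, hq'.symm⟩
      calc (j : M × M).1 = f q.1 := by rw [← hq']
        _ ≤ ⨆ q ∈ A1, f q.1 := le_biSup (fun q : V1 × V2 => f q.1) hq1
    · apply iSup₂_le; rintro q ⟨hqA, j, hj, hj'⟩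
      calc f q.1 = (j : M × M).1 := by rw [hj']
        _ ≤ ⨆ j ∈ J, (j : M × M).1 := le_biSup (fun j : e => (j : M × M).1) hj
  have c2 : (⨆ k ∈ Jᶜ, (k : M × M).2) = ⨆ q ∈ A2, g q.2 := by
    apply le_antisymm
    · apply iSup₂_le; rintro k hk
      obtain ⟨q, hqA, hq'⟩ := k.2
      have hq1 : q ∈ A2 := ⟨hqA, k, hk, hq'.symm⟩
      calc (k : M × M).2 = g q.2 := by rw [← hq']
        _ ≤ ⨆ q ∈ A2, g q.2 := le_biSup (fun q : V1 × V2 => g q.2) hq1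
    · apply iSup₂_le; rintro q ⟨hqA, k, hk, hk'⟩
      calc g q.2 = (k : M × M).2 := by rw [hk']
        _ ≤ ⨆ k ∈ Jᶜ, (k : M × M).2 := le_biSup (fun k : e => (k : M × M).2) hk
  rw [c1, c2, ← bsup_fst_eq hf_sup, ← bsup_snd_eq hg_sup]
  have hmem : (sSup (Prod.fst '' A1), sSup (Prod.snd '' A2)) ∈
      upperPolar (tensorRel V1 V2) A := by
    intro q hq
    by_cases hJ : (⟨(f q.1, g q.2), ⟨q, hq, rfl⟩⟩ : e) ∈ J
    · left; exact le_sSup ⟨q, ⟨hq, _, hJ, rfl⟩, rfl⟩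
    · right; exact le_sSup ⟨q, ⟨hq, _, hJ, rfl⟩, rfl⟩
  exact biInf_le (fun q : V1 × V2 => f q.1 ⊔ g q.2) hmem

include hf_sup hg_sup in
lemma easy1 (B : Set (V1 × V2)) :
    (⨆ p ∈ lowerPolar (tensorRel V1 V2) B, f p.1 ⊓ g p.2) ≤ ⨅ q ∈ B, f q.1 ⊔ g q.2 :=
  iSup₂_le fun _ hp => le_iInf₂ fun _ hq =>
    easy_aux (mono_of_sup hf_sup) (mono_of_sup hg_sup) (hp hq)

include hf_sup hg_sup in
lemma easy2 (A : Set (V1 × V2)) :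
    (⨆ p ∈ A, f p.1 ⊓ g p.2) ≤ ⨅ q ∈ upperPolar (tensorRel V1 V2) A, f q.1 ⊔ g q.2 :=
  iSup₂_le fun _ hp => le_iInf₂ fun _ hq =>
    easy_aux (mono_of_sup hf_sup) (mono_of_sup hg_sup) (hq hp)

include hf_sup hf_inf hg_sup hg_inf hdist in
lemma eq1 (B : Set (V1 × V2)) :
    (⨆ p ∈ lowerPolar (tensorRel V1 V2) B, f p.1 ⊓ g p.2) = ⨅ q ∈ B, f q.1 ⊔ g q.2 :=
  le_antisymm (easy1 hf_sup hg_sup B) (key2 hf_inf hg_inf hdist B)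

include hf_sup hf_inf hg_sup hg_inf hdist in
lemma eq2 (A : Set (V1 × V2)) :
    (⨆ p ∈ A, f p.1 ⊓ g p.2) = ⨅ q ∈ upperPolar (tensorRel V1 V2) A, f q.1 ⊔ g q.2 :=
  le_antisymm (easy2 hf_sup hg_sup A) (key1 hf_sup hg_sup hdist A)

include hf_sup hf_inf hg_sup hg_inf hdist in
lemma sup_clos (A : Set (V1 × V2)) :
    (⨆ p ∈ lowerPolar (tensorRel V1 V2) (upperPolar (tensorRel V1 V2) A),
      f p.1 ⊓ g p.2) = ⨆ p ∈ A, f p.1 ⊓ g p.2 := by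
  rw [eq1 hf_sup hf_inf hg_sup hg_inf hdist, eq2 hf_sup hf_inf hg_sup hg_inf hdist]

include hf_sup hf_inf hg_sup hg_inf hdist in
lemma inf_clos (B : Set (V1 × V2)) :
    (⨅ q ∈ upperPolar (tensorRel V1 V2) (lowerPolar (tensorRel V1 V2) B),
      f q.1 ⊔ g q.2) = ⨅ q ∈ B, f q.1 ⊔ g q.2 := by
  rw [← eq2 hf_sup hf_inf hg_sup hg_inf hdist, eq1 hf_sup hf_inf hg_sup hg_inf hdist]

end Key


section Wedge
variable {V1 V2 : Type*} [CompleteLattice V1] [CompleteLattice V2]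

lemma wedge_fst (x : V1) (y : V2) :
    (wedge x y).extent = {p : V1 × V2 | (p.1 ≤ x ∧ p.2 ≤ y) ∨ p.1 = ⊥ ∨ p.2 = ⊥} := by
  ext p
  constructor
  · intro hp
    by_cases h1 : p.1 = ⊥
    · exact Or.inr (Or.inl h1)
    by_cases h2 : p.2 = ⊥
    · exact Or.inr (Or.inr h2)
    refine Or.inl ⟨?_, ?_⟩
    · have hq : (x, (⊥ : V2)) ∈ upperPolar (tensorRel V1 V2) {(x, y)} := by
        rintro a ha
        rw [Set.mem_singleton_iff] at ha
        subst ha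
        exact Or.inl le_rfl
      rcases hp hq with h | h
      · exact h
      · exact absurd (le_bot_iff.mp h) h2
    · have hq : ((⊥ : V1), y) ∈ upperPolar (tensorRel V1 V2) {(x, y)} := by
        rintro a ha
        rw [Set.mem_singleton_iff] at ha
        subst ha
        exact Or.inr le_rfl
      rcases hp hq with h | h
      · exact absurd (le_bot_iff.mp h) h1
      · exact h
  · intro hp q hq
    have hxy : tensorRel V1 V2 (x, y) q := hq rfl
    rcases hp with ⟨ha, hb⟩ | h1 | h2
    · rcases hxy with h | h
      · exact Or.inl (ha.trans h)
      · exact Or.inr (hb.trans h)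
    · exact Or.inl (h1 ▸ bot_le)
    · exact Or.inr (h2 ▸ bot_le)

lemma wedge_eq_inf (x : V1) (y : V2) :
    wedge x y = wedge x ⊤ ⊓ wedge ⊤ y := by
  apply Concept.ext
  rw [Concept.extent_inf, wedge_fst, wedge_fst, wedge_fst]
  ext p
  simp only [Set.mem_inter_iff, Set.mem_setOf_eq, le_top, and_true, true_and]
  tauto

lemma wedge_snd (x : V1) (y : V2) :
    (wedge x y).intent = upperPolar (tensorRel V1 V2) {(x, y)} := rfl

lemma concept_eq_sSup_wedge (c : ConceptTensor V1 V2) :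
    c = sSup ((fun p : V1 × V2 => wedge p.1 p.2) '' c.extent) := by
  apply Concept.ext'
  rw [Concept.intent_sSup]
  rw [show (⋂ d ∈ (fun p : V1 × V2 => wedge p.1 p.2) '' c.extent, d.intent)
      = ⋂ p ∈ c.extent, (wedge p.1 p.2).intent from biInter_image]
  rw [← c.upperPolar_extent]
  ext q
  constructor
  · intro hq
    apply Set.mem_iInter₂.mpr
    intro p hp a ha
    rw [Set.mem_singleton_iff] at ha
    subst ha
    exact hq hp
  · intro hq a ha
    exact (Set.mem_iInter₂.mp hq a ha) rfl

end Wedge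

/-- (Wille) For complete lattice homomorphisms `f : V1 → M`,
`g : V2 → M` with mutually distributive images, there is a unique complete lattice
homomorphism `h : V1 ⊗ V2 → M` with `h ∘ ε1 = f` and `h ∘ ε2 = g`, where
`ε1(x) = x ⊼ ⊤` and `ε2(y) = ⊤ ⊼ y`. -/
theorem tensor_universal_complete (V1 V2 M : Type*)
    [CompleteLattice V1] [CompleteLattice V2] [CompleteLattice M]
    (f : V1 → M) (g : V2 → M)
    (hf_sup : ∀ s : Set V1, f (sSup s) = sSup (f '' s))
    (hf_inf : ∀ s : Set V1, f (sInf s) = sInf (f '' s))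
    (hg_sup : ∀ s : Set V2, g (sSup s) = sSup (g '' s))
    (hg_inf : ∀ s : Set V2, g (sInf s) = sInf (g '' s))
    (hdist : MutuallyDistrib (Set.range f) (Set.range g)) :
    ∃! h : ConceptTensor V1 V2 → M,
      ((∀ s : Set (ConceptTensor V1 V2), h (sSup s) = sSup (h '' s)) ∧
       (∀ s : Set (ConceptTensor V1 V2), h (sInf s) = sInf (h '' s))) ∧
      (∀ x : V1, h (wedge x ⊤) = f x) ∧ (∀ y : V2, h (wedge ⊤ y) = g y) := by
  classical
  set F : ConceptTensor V1 V2 → M := fun c => ⨆ p ∈ c.extent, f p.1 ⊓ g p.2 with hF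
  have hftop : f ⊤ = ⊤ := by have := hf_inf ∅; simpa using this
  have hgtop : g ⊤ = ⊤ := by have := hg_inf ∅; simpa using this
  have hFwedge : ∀ (x : V1) (y : V2), F (wedge x y) = f x ⊓ g y := by
    intro x y
    have hfst : (wedge x y).extent = lowerPolar (tensorRel V1 V2)
        (upperPolar (tensorRel V1 V2) {(x, y)}) := rfl
    simp only [hF, hfst, sup_clos hf_sup hf_inf hg_sup hg_inf hdist]
    simp
  have hFint : ∀ c : ConceptTensor V1 V2, F c = ⨅ q ∈ c.intent, f q.1 ⊔ g q.2 := by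
    intro c
    simp only [hF]
    rw [eq2 hf_sup hf_inf hg_sup hg_inf hdist c.extent, c.upperPolar_extent]
  have hFsup : ∀ s : Set (ConceptTensor V1 V2), F (sSup s) = sSup (F '' s) := by
    intro s
    have h1 : (sSup s).extent = lowerPolar (tensorRel V1 V2)
        (upperPolar (tensorRel V1 V2) (⋃ c ∈ s, (c : ConceptTensor V1 V2).extent)) := by
      have he : (⋂ c ∈ s, (c : ConceptTensor V1 V2).intent)
          = upperPolar (tensorRel V1 V2) (⋃ c ∈ s, (c : ConceptTensor V1 V2).extent) := by
        rw [upperPolar_iUnion₂]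
        exact iInter₂_congr fun (c : ConceptTensor V1 V2) _ => c.upperPolar_extent.symm
      rw [Concept.extent_sSup, he]
    simp only [hF]
    rw [h1, sup_clos hf_sup hf_inf hg_sup hg_inf hdist, sSup_image]
    simp only [iSup_iUnion]
  have hFinf : ∀ s : Set (ConceptTensor V1 V2), F (sInf s) = sInf (F '' s) := by
    intro s
    have h1 : (sInf s).intent = upperPolar (tensorRel V1 V2)
        (lowerPolar (tensorRel V1 V2) (⋃ c ∈ s, (c : ConceptTensor V1 V2).intent)) := by
      have he : (⋂ c ∈ s, (c : ConceptTensor V1 V2).extent)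
          = lowerPolar (tensorRel V1 V2) (⋃ c ∈ s, (c : ConceptTensor V1 V2).intent) := by
        rw [lowerPolar_iUnion₂]
        exact iInter₂_congr fun (c : ConceptTensor V1 V2) _ => c.lowerPolar_intent.symm
      rw [Concept.intent_sInf, he]
    rw [hFint (sInf s), h1, inf_clos hf_sup hf_inf hg_sup hg_inf hdist, sInf_image]
    simp only [iInf_iUnion]
    exact iInf_congr fun c => iInf_congr fun _ => (hFint c).symm
  have hε1 : ∀ x : V1, F (wedge x ⊤) = f x := fun x => by
    rw [hFwedge, hgtop, inf_top_eq]
  have hε2 : ∀ y : V2, F (wedge ⊤ y) = g y := fun y => by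
    rw [hFwedge, hftop, top_inf_eq]
  refine ⟨F, ⟨⟨hFsup, hFinf⟩, hε1, hε2⟩, ?_⟩
  rintro h ⟨⟨hsup, hinf⟩, h1, h2⟩
  funext c
  have hpair : ∀ (x : V1) (y : V2), h (wedge x y) = f x ⊓ g y := by
    intro x y
    rw [wedge_eq_inf]
    have hsi : wedge x ⊤ ⊓ wedge ⊤ y
        = sInf {wedge x ⊤, wedge ⊤ y} := sInf_pair.symm
    rw [hsi, hinf, Set.image_pair, sInf_pair, h1, h2]
  conv_lhs => rw [concept_eq_sSup_wedge c]
  rw [hsup, sSup_image, iSup_image]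
  simp only [hF]
  exact iSup_congr fun p => iSup_congr fun _ => hpair p.1 p.2
end
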